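/- With the type-A_{n−1} setup (n ≥ 2, V = {γ ∈ ℝⁿ : Σγᵢ = 0}, θ∨ = e₁ − e_n): for 1 ≤ d ≤ n−1 and the word c^{(d)} = s_d s_{d+1} ⋯ s_{n−1} s_{d−1} ⋯ s₁ s₀, the restriction of I − Ř_{c^{(d)}} to V is invertible, and (I_V − R_{c^{(d)}})⁻¹ θ∨ = (1/(np))·(((n+1)/2 − dp/(n(1−p)))·ω_n + (p/(1−p))·ω_d − ζ), where ζ = Σ_{i=1}^n i·e_i and ω_k = Σ_{i=1}^k e_i. -/

import Mathlib

open Fin.NatCast in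
/-- `Ř_{s_i} = p·P̌_{s_i} + (1−p)·I` on `ℝⁿ` with `n = m + 2`, where `P̌_{s_i}`
swaps coordinates `i − 1` and `i` cyclically mod `n` (0-based coordinates). -/
noncomputable def RA (m : ℕ) (p : ℝ) (i : ℕ) (γ : Fin (m + 2) → ℝ) : Fin (m + 2) → ℝ :=
  (1 - p) • γ + p • (γ ∘ Equiv.swap ((i + (m + 1) : ℕ) : Fin (m + 2)) ((i : ℕ) : Fin (m + 2)))

/-- `Ř_{c^{(d)}}` for the word `c^{(d)} = s_d s_{d+1} ⋯ s_{n−1} s_{d−1} ⋯ s₁ s₀`,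
with the letters applied in the order `s_d, s_{d+1}, …, s_{n−1}, s_{d−1}, …, s₁, s₀`. -/
noncomputable def RcA (m : ℕ) (p : ℝ) (d : ℕ) (γ : Fin (m + 2) → ℝ) : Fin (m + 2) → ℝ :=
  ((List.range' d (m + 2 - d)) ++ (List.range d).reverse).foldl (fun v i => RA m p i v) γ

/-- The claimed preimage `(1/(np))·(((n+1)/2 − dp/(n(1−p)))·ω_n + (p/(1−p))·ω_d − ζ)`,
where `ζ = Σ i·e_i` and `ω_k = Σ_{i=1}^k e_i`, with `n = m + 2`. -/
noncomputable def upsA (m : ℕ) (p : ℝ) (d : ℕ) : Fin (m + 2) → ℝ := fun i =>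
  (1 / ((m + 2 : ℝ) * p)) *
    ((((m : ℝ) + 3) / 2 - d * p / ((m + 2 : ℝ) * (1 - p))) +
      (if (i : ℕ) < d then p / (1 - p) else 0) - ((i : ℕ) + 1))

open Fin.NatCast in
/-- `θ∨ = e₁ − e_n`. -/
noncomputable def thetaA (m : ℕ) : Fin (m + 2) → ℝ :=
  (Pi.single (0 : Fin (m + 2)) (1 : ℝ)) - Pi.single ((m + 1 : ℕ) : Fin (m + 2)) (1 : ℝ)

namespace Stmt17

open Fin.NatCast

lemma RA_apply (m : ℕ) (p : ℝ) (i : ℕ) (γ : Fin (m+2) → ℝ) (j : Fin (m+2)) :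
    RA m p i γ j = (1 - p) * γ j +
      p * γ (Equiv.swap ((i + (m + 1) : ℕ) : Fin (m + 2)) ((i : ℕ) : Fin (m + 2)) j) := rfl

lemma castA (m i : ℕ) (hi : 1 ≤ i) :
    ((i + (m + 1) : ℕ) : Fin (m + 2)) = ((i - 1 : ℕ) : Fin (m + 2)) := by
  have h : i + (m + 1) = (i - 1) + (m + 2) := by omega
  rw [h, Nat.cast_add, Fin.natCast_self, add_zero]

lemma val_cast (m a : ℕ) (h : a < m + 2) : (((a : ℕ) : Fin (m+2)) : ℕ) = a :=
  Fin.val_cast_of_lt h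

lemma RA_eq (m : ℕ) (p : ℝ) (i : ℕ) (h1 : 1 ≤ i) (h2 : i ≤ m + 1) (γ : Fin (m+2) → ℝ)
    (j : Fin (m+2)) :
    RA m p i γ j =
      if (j : ℕ) = i - 1 then (1 - p) * γ j + p * γ ((i : ℕ) : Fin (m+2))
      else if (j : ℕ) = i then (1 - p) * γ j + p * γ (((i - 1 : ℕ)) : Fin (m+2))
      else γ j := by
  rw [RA_apply, castA m i h1, Equiv.swap_apply_def]
  have ha : (((i - 1 : ℕ) : Fin (m+2)) : ℕ) = i - 1 := val_cast m _ (by omega)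
  have hb : (((i : ℕ) : Fin (m+2)) : ℕ) = i := val_cast m _ (by omega)
  by_cases hja : (j : ℕ) = i - 1
  · have e1 : j = ((i - 1 : ℕ) : Fin (m+2)) := Fin.ext (by rw [ha]; exact hja)
    rw [if_pos e1, if_pos hja]
  · have e1 : ¬ (j = ((i - 1 : ℕ) : Fin (m+2))) := fun h => hja (by rw [h, ha])
    rw [if_neg e1, if_neg hja]
    by_cases hjb : (j : ℕ) = i
    · have e2 : j = ((i : ℕ) : Fin (m+2)) := Fin.ext (by rw [hb]; exact hjb)
      rw [if_pos e2, if_pos hjb]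
    · have e2 : ¬ (j = ((i : ℕ) : Fin (m+2))) := fun h => hjb (by rw [h, hb])
      rw [if_neg e2, if_neg hjb]
      ring

lemma RA_eq_zero (m : ℕ) (p : ℝ) (γ : Fin (m+2) → ℝ) (j : Fin (m+2)) :
    RA m p 0 γ j =
      if (j : ℕ) = m + 1 then (1 - p) * γ j + p * γ (0 : Fin (m+2))
      else if (j : ℕ) = 0 then (1 - p) * γ j + p * γ (((m + 1 : ℕ)) : Fin (m+2))
      else γ j := by
  rw [RA_apply, Equiv.swap_apply_def]
  have ha : (((0 + (m + 1) : ℕ) : Fin (m+2)) : ℕ) = m + 1 := by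
    rw [Nat.zero_add]; exact val_cast m _ (by omega)
  have hb : (((0 : ℕ) : Fin (m+2)) : ℕ) = 0 := val_cast m _ (by omega)
  by_cases hja : (j : ℕ) = m + 1
  · have e1 : j = ((0 + (m + 1) : ℕ) : Fin (m+2)) := Fin.ext (by rw [ha]; exact hja)
    rw [if_pos e1, if_pos hja]
    norm_num
  · have e1 : ¬ (j = ((0 + (m + 1) : ℕ) : Fin (m+2))) := fun h => hja (by rw [h, ha])
    rw [if_neg e1, if_neg hja]
    by_cases hjb : (j : ℕ) = 0
    · have e2 : j = ((0 : ℕ) : Fin (m+2)) := Fin.ext (by rw [hb]; exact hjb)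
      rw [if_pos e2, if_pos hjb]
      norm_num
    · have e2 : ¬ (j = ((0 : ℕ) : Fin (m+2))) := fun h => hjb (by rw [h, hb])
      rw [if_neg e2, if_neg hjb]
      ring


noncomputable def gA (m : ℕ) (p : ℝ) (d k : ℕ) : Fin (m+2) → ℝ := fun j =>
  (if (j:ℕ) + 1 < d then p/(1-p) else 0) + (if (j:ℕ) = k then p/(1-p) else 0) - ((j:ℕ) : ℝ)

noncomputable def hA (m : ℕ) (p : ℝ) (d k : ℕ) : Fin (m+2) → ℝ := fun j =>
  (if (j:ℕ) + 2 ≤ k then p/(1-p) else 0) + (if k ≤ (j:ℕ) ∧ (j:ℕ) < d then p/(1-p) else 0)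
    + (if (j:ℕ) = m + 1 then p/(1-p) else 0) - ((j:ℕ) : ℝ)

lemma step1 (m : ℕ) (p : ℝ) (hp : p ≠ 1) (d k : ℕ) (hd : 1 ≤ d) (hk1 : d - 1 ≤ k)
    (hk2 : k + 1 ≤ m + 1) :
    RA m p (k+1) (gA m p d k) = gA m p d (k+1) := by
  have hp' : (1 : ℝ) - p ≠ 0 := sub_ne_zero.mpr (Ne.symm hp)
  funext j
  obtain ⟨jv, hj⟩ := j
  rw [RA_eq m p (k+1) (by omega) hk2]
  simp only [Nat.add_sub_cancel, gA, val_cast m (k+1) (by omega), val_cast m k (by omega)]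
  split_ifs <;> subst_vars <;> first
    | (exfalso; assumption)
    | omega
    | (push_cast; field_simp; try ring)

noncomputable def vA (m : ℕ) (p : ℝ) (d : ℕ) : Fin (m+2) → ℝ := fun j =>
  (if (j:ℕ) < d then p/(1-p) else 0) - ((j:ℕ) : ℝ)

noncomputable def FA (m : ℕ) (p : ℝ) (d : ℕ) : Fin (m+2) → ℝ := fun j =>
  vA m p d j - ((m:ℝ)+2) * p *
    ((if (j:ℕ) = 0 then 1 else 0) - (if (j:ℕ) = m + 1 then 1 else 0))

set_option maxHeartbeats 1000000 in
lemma step2 (m : ℕ) (p : ℝ) (hp : p ≠ 1) (d k : ℕ) (hk1 : k + 2 ≤ d) (hd2 : d ≤ m + 1) :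
    RA m p (k+1) (hA m p d (k+2)) = hA m p d (k+1) := by
  have hp' : (1 : ℝ) - p ≠ 0 := sub_ne_zero.mpr (Ne.symm hp)
  funext j
  obtain ⟨jv, hj⟩ := j
  rw [RA_eq m p (k+1) (by omega) (by omega)]
  simp only [Nat.add_sub_cancel, hA, val_cast m (k+1) (by omega), val_cast m k (by omega)]
  split_ifs <;> subst_vars <;> first
    | (exfalso; assumption)
    | omega
    | (push_cast; field_simp; try ring)

set_option maxHeartbeats 1000000 in
lemma step0 (m : ℕ) (p : ℝ) (hp : p ≠ 1) (d : ℕ) (hd1 : 1 ≤ d) (hd2 : d ≤ m + 1) :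
    RA m p 0 (hA m p d 1) = FA m p d := by
  have hp' : (1 : ℝ) - p ≠ 0 := sub_ne_zero.mpr (Ne.symm hp)
  funext j
  obtain ⟨jv, hj⟩ := j
  rw [RA_eq_zero]
  simp only [hA, vA, FA, val_cast m (m+1) (by omega), show ((0 : Fin (m+2)) : ℕ) = 0 from rfl]
  split_ifs <;> subst_vars <;> first
    | (exfalso; assumption)
    | omega
    | (push_cast; field_simp; try ring)

lemma phase1 (m : ℕ) (p : ℝ) (hp : p ≠ 1) (d : ℕ) (hd : 1 ≤ d) :
    ∀ t s, d ≤ s → s + t ≤ m + 2 →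
      List.foldl (fun v i => RA m p i v) (gA m p d (s-1)) (List.range' s t) =
        gA m p d (s-1+t) := by
  intro t
  induction t with
  | zero => intro s _ _; simp
  | succ t ih =>
    intro s hs hst
    rw [List.range'_succ, List.foldl_cons]
    have h1 : RA m p s (gA m p d (s-1)) = gA m p d s := by
      have := step1 m p hp d (s-1) hd (by omega) (by omega)
      rwa [show s - 1 + 1 = s by omega] at this
    rw [h1]
    have h2 := ih (s+1) (by omega) (by omega)
    rw [show s + 1 - 1 = s from rfl] at h2
    rw [show s - 1 + (t+1) = s + t by omega, h2]

lemma phase2 (m : ℕ) (p : ℝ) (hp : p ≠ 1) (d : ℕ) (hd1 : 1 ≤ d) (hd2 : d ≤ m + 1) :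
    ∀ k, k + 1 ≤ d →
      List.foldl (fun v i => RA m p i v) (hA m p d (k+1)) (List.range (k+1)).reverse =
        FA m p d := by
  intro k
  induction k with
  | zero =>
    intro _
    simp only [List.range_succ, List.range_zero, List.nil_append, List.reverse_singleton,
      List.foldl_cons, List.foldl_nil]
    exact step0 m p hp d hd1 hd2
  | succ k ih =>
    intro hk
    rw [show k+1+1 = k+2 from rfl, List.range_succ, List.reverse_append,
      List.reverse_singleton, List.singleton_append, List.foldl_cons]
    rw [step2 m p hp d k hk hd2]
    exact ih (by omega)

lemma v_eq_g (m : ℕ) (p : ℝ) (d : ℕ) (hd : 1 ≤ d) : vA m p d = gA m p d (d-1) := by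
  funext j
  simp only [vA, gA]
  split_ifs <;> first | omega | ring

lemma g_eq_h (m : ℕ) (p : ℝ) (d : ℕ) (hd2 : d ≤ m + 1) :
    gA m p d (m+1) = hA m p d d := by
  funext j
  simp only [gA, hA]
  split_ifs <;> first | omega | ring

lemma Rc_v (m : ℕ) (p : ℝ) (hp : p ≠ 1) (d : ℕ) (hd1 : 1 ≤ d) (hd2 : d ≤ m + 1) :
    RcA m p d (vA m p d) = FA m p d := by
  obtain ⟨e, rfl⟩ : ∃ e, d = e + 1 := ⟨d - 1, by omega⟩
  unfold RcA
  rw [List.foldl_append, v_eq_g m p (e+1) hd1,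
    phase1 m p hp (e+1) hd1 (m+2-(e+1)) (e+1) le_rfl (by omega),
    show (e+1) - 1 + (m+2-(e+1)) = m + 1 by omega, g_eq_h m p (e+1) hd2]
  exact phase2 m p hp (e+1) hd1 hd2 e (by omega)

lemma RA_affine (m : ℕ) (p : ℝ) (i : ℕ) (α c : ℝ) (γ : Fin (m+2) → ℝ) :
    RA m p i (fun j => α * γ j + c) = fun j => α * RA m p i γ j + c := by
  funext j
  simp only [RA_apply]
  ring

lemma foldl_affine (m : ℕ) (p : ℝ) (α c : ℝ) :
    ∀ (L : List ℕ) (γ : Fin (m+2) → ℝ),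
      List.foldl (fun v i => RA m p i v) (fun j => α * γ j + c) L =
        fun j => α * List.foldl (fun v i => RA m p i v) γ L j + c := by
  intro L
  induction L with
  | nil => intro γ; simp
  | cons i L ih =>
    intro γ
    simp only [List.foldl_cons, RA_affine m p i α c γ, ih (RA m p i γ)]

lemma ups_eq (m : ℕ) (p : ℝ) (d : ℕ) :
    upsA m p d = fun j => (1 / ((m + 2 : ℝ) * p)) * vA m p d j +
      (1 / ((m + 2 : ℝ) * p)) * ((((m : ℝ) + 3) / 2 - d * p / ((m + 2 : ℝ) * (1 - p))) - 1) := by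
  funext j
  simp only [upsA, vA]
  ring

lemma Rc_ups (m : ℕ) (p : ℝ) (hp : p ≠ 1) (d : ℕ) (hd1 : 1 ≤ d) (hd2 : d ≤ m + 1) :
    RcA m p d (upsA m p d) = fun j => (1 / ((m + 2 : ℝ) * p)) * FA m p d j +
      (1 / ((m + 2 : ℝ) * p)) * ((((m : ℝ) + 3) / 2 - d * p / ((m + 2 : ℝ) * (1 - p))) - 1) := by
  rw [ups_eq]
  show List.foldl _ _ _ = _
  rw [foldl_affine]
  have := Rc_v m p hp d hd1 hd2
  unfold RcA at this
  rw [this]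

lemma part3 (m : ℕ) (p : ℝ) (hp : p ∈ Set.Ioo (0:ℝ) 1) (d : ℕ) (hd1 : 1 ≤ d) (hd2 : d ≤ m+1) :
    upsA m p d - RcA m p d (upsA m p d) = thetaA m := by
  obtain ⟨hp0, hp1⟩ := hp
  have hp' : p ≠ 1 := ne_of_lt hp1
  have hnp : ((m:ℝ) + 2) * p ≠ 0 := by positivity
  rw [Rc_ups m p hp' d hd1 hd2, ups_eq]
  funext j
  simp only [Pi.sub_apply, FA, thetaA, Pi.single_apply]
  have h0 : (j = (0 : Fin (m+2))) ↔ ((j:ℕ) = 0) := by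
    rw [Fin.ext_iff]; rfl
  have h1 : (j = (((m+1:ℕ)) : Fin (m+2))) ↔ ((j:ℕ) = m+1) := by
    rw [Fin.ext_iff, val_cast m (m+1) (by omega)]
  simp only [h0, h1]
  split_ifs <;> field_simp <;> ring

lemma part2 (m : ℕ) (p : ℝ) (hp : p ∈ Set.Ioo (0:ℝ) 1) (d : ℕ) (hd1 : 1 ≤ d) (hd2 : d ≤ m+1) :
    (∑ i, upsA m p d i) = 0 := by
  obtain ⟨hp0, hp1⟩ := hp
  have hp1' : (1:ℝ) - p ≠ 0 := sub_ne_zero.mpr (Ne.symm (ne_of_lt hp1))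
  have hnp : ((m:ℝ) + 2) * p ≠ 0 := by positivity
  simp only [upsA]
  rw [← Finset.mul_sum]
  have hsum : ∑ i : Fin (m+2), (((((m : ℝ) + 3) / 2 - d * p / ((m + 2 : ℝ) * (1 - p))) +
      (if (i : ℕ) < d then p / (1 - p) else 0) - ((i : ℕ) + 1))) =
      (m+2) * (((m : ℝ) + 3) / 2 - d * p / ((m + 2 : ℝ) * (1 - p)))
        + d * (p / (1-p)) - (∑ i : Fin (m+2), (((i:ℕ):ℝ) + 1)) := by
    rw [Finset.sum_sub_distrib, Finset.sum_add_distrib, Finset.sum_const]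
    simp only [Finset.card_univ, Fintype.card_fin, nsmul_eq_mul]
    congr 2
    · push_cast; ring
    · rw [Fin.sum_univ_eq_sum_range (fun i => if i < d then p / (1-p) else 0)]
      have : ∀ i ∈ Finset.range (m+2), (if i < d then p / (1-p) else 0) =
          (if i ∈ Finset.range d then p / (1-p) else 0) := by
        intro i _; simp [Finset.mem_range]
      have hir : Finset.range (m+2) ∩ Finset.range d = Finset.range d := by
        ext x; simp only [Finset.mem_inter, Finset.mem_range]; omega
      rw [Finset.sum_congr rfl this, Finset.sum_ite_mem, hir,
        Finset.sum_const, Finset.card_range, nsmul_eq_mul]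
  rw [hsum]
  have hgauss : (∑ i : Fin (m+2), (((i:ℕ):ℝ) + 1)) = ((m:ℝ)+2) * ((m:ℝ)+3) / 2 := by
    have h2 : ((∑ i ∈ Finset.range (m+2), (i:ℝ))) * 2 = ((m:ℝ)+2) * ((m:ℝ)+1) := by
      have h := Finset.sum_range_id_mul_two (m+2)
      rw [show m+2-1 = m+1 from rfl] at h
      have h' := congrArg (Nat.cast : ℕ → ℝ) h
      push_cast at h'
      linarith [h']
    rw [Fin.sum_univ_eq_sum_range (fun i => ((i:ℝ) + 1)), Finset.sum_add_distrib,
      Finset.sum_const, Finset.card_range, nsmul_eq_mul, mul_one]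
    push_cast
    linear_combination h2 / 2
  rw [hgauss]
  field_simp
  ring

lemma swap_ne (m i : ℕ) :
    ((i + (m + 1) : ℕ) : Fin (m + 2)) ≠ ((i : ℕ) : Fin (m + 2)) := by
  intro h
  rw [Nat.cast_add] at h
  have h' : ((i:ℕ) : Fin (m+2)) + ((m+1:ℕ) : Fin (m+2)) = ((i:ℕ) : Fin (m+2)) + 0 := by
    rw [add_zero]; exact h
  have h2 := add_left_cancel h'
  have h3 : (((m + 1 : ℕ) : Fin (m + 2)) : ℕ) = m + 1 := val_cast m _ (by omega)
  rw [h2] at h3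
  simp at h3

lemma RA_sq_sum (m : ℕ) (p : ℝ) (i : ℕ) (γ : Fin (m+2) → ℝ) :
    ∑ j, (RA m p i γ j)^2 = ∑ j, (γ j)^2 -
      2*p*(1-p)*(γ (((i + (m+1) : ℕ)) : Fin (m+2)) - γ ((i : ℕ) : Fin (m+2)))^2 := by
  set a := (((i + (m+1) : ℕ)) : Fin (m+2)) with ha
  set b := ((i : ℕ) : Fin (m+2)) with hb
  have hab : a ≠ b := swap_ne m i
  set σ := Equiv.swap a b with hσ
  have hT : ∑ j, ((γ j)^2 - γ j * γ (σ j)) = (γ a - γ b)^2 := by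
    rw [← Finset.sum_subset (Finset.subset_univ ({a, b} : Finset (Fin (m+2))))
      (fun x _ hx => ?_)]
    · rw [Finset.sum_pair hab, hσ, Equiv.swap_apply_left, Equiv.swap_apply_right]
      ring
    · simp only [Finset.mem_insert, Finset.mem_singleton, not_or] at hx
      rw [hσ, Equiv.swap_apply_of_ne_of_ne hx.1 hx.2]
      ring
  rw [Finset.sum_sub_distrib] at hT
  have hexp : ∑ j, (RA m p i γ j)^2 =
      ∑ j, ((1-p)^2 * (γ j)^2 + p^2 * (γ (σ j))^2 + 2*p*(1-p)*(γ j * γ (σ j))) := by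
    apply Finset.sum_congr rfl
    intro j _
    rw [RA_apply]
    ring
  rw [hexp]
  rw [Finset.sum_add_distrib, Finset.sum_add_distrib, ← Finset.mul_sum, ← Finset.mul_sum,
    ← Finset.mul_sum]
  rw [Equiv.sum_comp σ (fun j => (γ j)^2)]
  linear_combination (-(2*p*(1-p))) * hT

lemma RA_sq_le (m : ℕ) (p : ℝ) (hp : p ∈ Set.Ioo (0:ℝ) 1) (i : ℕ) (γ : Fin (m+2) → ℝ) :
    ∑ j, (RA m p i γ j)^2 ≤ ∑ j, (γ j)^2 := by
  rw [RA_sq_sum]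
  have h1 : 0 < 2*p*(1-p) := by nlinarith [hp.1, hp.2]
  nlinarith [sq_nonneg (γ (((i + (m+1) : ℕ)) : Fin (m+2)) - γ ((i : ℕ) : Fin (m+2)))]

lemma foldl_sq_le (m : ℕ) (p : ℝ) (hp : p ∈ Set.Ioo (0:ℝ) 1) :
    ∀ (L : List ℕ) (γ : Fin (m+2) → ℝ),
      ∑ j, (List.foldl (fun v i => RA m p i v) γ L j)^2 ≤ ∑ j, (γ j)^2 := by
  intro L
  induction L with
  | nil => intro γ; simp
  | cons i L ih =>
    intro γ
    rw [List.foldl_cons]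
    exact le_trans (ih (RA m p i γ)) (RA_sq_le m p hp i γ)

lemma RA_fixed (m : ℕ) (p : ℝ) (i : ℕ) (γ : Fin (m+2) → ℝ)
    (h : γ (((i + (m+1) : ℕ)) : Fin (m+2)) = γ ((i : ℕ) : Fin (m+2))) :
    RA m p i γ = γ := by
  funext j
  rw [RA_apply]
  rcases eq_or_ne j (((i + (m+1) : ℕ)) : Fin (m+2)) with rfl | hj1
  · rw [Equiv.swap_apply_left, ← h]; ring
  · rcases eq_or_ne j ((i : ℕ) : Fin (m+2)) with rfl | hj2
    · rw [Equiv.swap_apply_right, h]; ring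
    · rw [Equiv.swap_apply_of_ne_of_ne hj1 hj2]; ring

lemma eq_case (m : ℕ) (p : ℝ) (hp : p ∈ Set.Ioo (0:ℝ) 1) :
    ∀ (L : List ℕ) (γ : Fin (m+2) → ℝ),
      ∑ j, (List.foldl (fun v i => RA m p i v) γ L j)^2 = ∑ j, (γ j)^2 →
      List.foldl (fun v i => RA m p i v) γ L = γ ∧
        ∀ i ∈ L, γ (((i + (m+1) : ℕ)) : Fin (m+2)) = γ ((i : ℕ) : Fin (m+2)) := by
  intro L
  induction L with
  | nil => intro γ _; exact ⟨rfl, by simp⟩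
  | cons i L ih =>
    intro γ h
    rw [List.foldl_cons] at h
    have h1 := foldl_sq_le m p hp L (RA m p i γ)
    have h2 := RA_sq_sum m p i γ
    have hpos : 0 < 2*p*(1-p) := by nlinarith [hp.1, hp.2]
    have hΔ : (γ (((i + (m+1) : ℕ)) : Fin (m+2)) - γ ((i : ℕ) : Fin (m+2)))^2 = 0 := by
      nlinarith [sq_nonneg (γ (((i + (m+1) : ℕ)) : Fin (m+2)) - γ ((i : ℕ) : Fin (m+2)))]
    have heq : γ (((i + (m+1) : ℕ)) : Fin (m+2)) = γ ((i : ℕ) : Fin (m+2)) := by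
      have := pow_eq_zero_iff (n := 2) (by norm_num) |>.mp hΔ
      linarith [sub_eq_zero.mp this]
    have hfix : RA m p i γ = γ := RA_fixed m p i γ heq
    rw [hfix] at h
    obtain ⟨hf, hall⟩ := ih γ h
    refine ⟨by rw [List.foldl_cons, hfix, hf], ?_⟩
    intro i' hi'
    rcases List.mem_cons.mp hi' with rfl | hi'
    · exact heq
    · exact hall i' hi'

lemma RA_sub (m : ℕ) (p : ℝ) (i : ℕ) (γ₁ γ₂ : Fin (m+2) → ℝ) :
    RA m p i (γ₁ - γ₂) = RA m p i γ₁ - RA m p i γ₂ := by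
  funext j
  simp only [Pi.sub_apply, RA_apply]
  ring

lemma foldl_sub (m : ℕ) (p : ℝ) :
    ∀ (L : List ℕ) (γ₁ γ₂ : Fin (m+2) → ℝ),
      List.foldl (fun v i => RA m p i v) (γ₁ - γ₂) L =
        List.foldl (fun v i => RA m p i v) γ₁ L - List.foldl (fun v i => RA m p i v) γ₂ L := by
  intro L
  induction L with
  | nil => intro γ₁ γ₂; simp
  | cons i L ih =>
    intro γ₁ γ₂
    simp only [List.foldl_cons, RA_sub m p i γ₁ γ₂, ih]

lemma mem_word (m d i : ℕ) (hd2 : d ≤ m + 1) (hi : i ≤ m + 1) :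
    i ∈ (List.range' d (m + 2 - d)) ++ (List.range d).reverse := by
  simp only [List.mem_append, List.mem_reverse, List.mem_range, List.mem_range'_1]
  omega

lemma part1 (m : ℕ) (p : ℝ) (hp : p ∈ Set.Ioo (0:ℝ) 1) (d : ℕ) (hd1 : 1 ≤ d) (hd2 : d ≤ m+1) :
    ∀ γ₁ γ₂ : Fin (m + 2) → ℝ, (∑ i, γ₁ i) = 0 → (∑ i, γ₂ i) = 0 →
      γ₁ - RcA m p d γ₁ = γ₂ - RcA m p d γ₂ → γ₁ = γ₂ := by
  intro γ₁ γ₂ hs1 hs2 hdiff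
  set γ : Fin (m+2) → ℝ := γ₁ - γ₂ with hγ
  have hsum : ∑ i, γ i = 0 := by
    simp only [hγ, Pi.sub_apply, Finset.sum_sub_distrib, hs1, hs2, sub_zero]
  have hfix : RcA m p d γ = γ := by
    unfold RcA
    rw [hγ, foldl_sub]
    funext j
    have h := congrFun hdiff j
    simp only [Pi.sub_apply] at h ⊢
    have e1 : RcA m p d γ₁ j =
        List.foldl (fun v i => RA m p i v) γ₁
          ((List.range' d (m + 2 - d)) ++ (List.range d).reverse) j := rfl
    have e2 : RcA m p d γ₂ j =
        List.foldl (fun v i => RA m p i v) γ₂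
          ((List.range' d (m + 2 - d)) ++ (List.range d).reverse) j := rfl
    rw [e1, e2] at h
    linarith
  have hkey : ∑ j, (List.foldl (fun v i => RA m p i v) γ
      ((List.range' d (m + 2 - d)) ++ (List.range d).reverse) j)^2 = ∑ j, (γ j)^2 := by
    have : List.foldl (fun v i => RA m p i v) γ
        ((List.range' d (m + 2 - d)) ++ (List.range d).reverse) = γ := hfix
    rw [this]
  obtain ⟨_, hall⟩ := eq_case m p hp _ γ hkey
  have hadj : ∀ i, 1 ≤ i → i ≤ m+1 →
      γ (((i - 1 : ℕ)) : Fin (m+2)) = γ ((i : ℕ) : Fin (m+2)) := by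
    intro i h1 h2
    rw [← castA m i h1]
    exact hall i (mem_word m d i hd2 h2)
  have hconst : ∀ k, k ≤ m + 1 → γ ((k : ℕ) : Fin (m+2)) = γ ((0 : ℕ) : Fin (m+2)) := by
    intro k
    induction k with
    | zero => intro _; rfl
    | succ k ih =>
      intro hk
      have := hadj (k+1) (by omega) hk
      rw [show k + 1 - 1 = k from rfl] at this
      rw [← this]
      exact ih (by omega)
  have hall0 : ∀ j : Fin (m+2), γ j = γ 0 := by
    intro j
    have := hconst j.val (by omega)
    rwa [Fin.cast_val_eq_self] at this
  have hzero : γ 0 = 0 := by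
    have : ∑ j : Fin (m+2), γ j = ∑ _j : Fin (m+2), γ 0 :=
      Finset.sum_congr rfl (fun j _ => hall0 j)
    rw [hsum, Finset.sum_const, Finset.card_univ, Fintype.card_fin, nsmul_eq_mul] at this
    have hm2 : ((m:ℝ) + 2) ≠ 0 := by positivity
    replace this := mul_eq_zero.mp this.symm
    rcases this with h | h
    · exact absurd h (by push_cast at hm2 ⊢; exact_mod_cast (by omega : (m+2 : ℕ) ≠ 0))
    · exact h
  have : γ = 0 := by
    funext j
    rw [hall0 j, hzero]
    rfl
  have := sub_eq_zero.mp (hγ ▸ this)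
  exact this

end Stmt17

theorem stmt17 (m : ℕ) (p : ℝ) (hp : p ∈ Set.Ioo (0:ℝ) 1)
    (d : ℕ) (hd1 : 1 ≤ d) (hd2 : d ≤ m + 1) :
    (∀ γ₁ γ₂ : Fin (m + 2) → ℝ, (∑ i, γ₁ i) = 0 → (∑ i, γ₂ i) = 0 →
        γ₁ - RcA m p d γ₁ = γ₂ - RcA m p d γ₂ → γ₁ = γ₂) ∧
      (∑ i, upsA m p d i) = 0 ∧
      upsA m p d - RcA m p d (upsA m p d) = thetaA m :=
  ⟨Stmt17.part1 m p hp d hd1 hd2, Stmt17.part2 m p hp d hd1 hd2, Stmt17.part3 m p hp d hd1 hd2⟩
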